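/- arXiv:2505.15780 — 2 statements merged into one kernel-verified Lean document; each statement's English description precedes it below -/
import Mathlib

section
/- Let V be a finite-dimensional complex normed vector space of complex dimension n, with Borel σ-algebra and additive Haar measure μ. Let F₁, F₂ be pseudonorms on V with unit balls Ω₁, Ω₂, satisfying α·F₁ ≤ F₂ ≤ β·F₁ with 0 < α ≤ β, and let h₁, h₂ be positive definite Hermitian forms on V which are the Binet–Legendre metrics of Ω₁ and Ω₂ respectively. If there exists v ≠ 0 for which one of the two comparison inequalities is an equality, i.e. h₂(v, v) = (β^{2n+2}/α^{2n}) · h₁(v, v) or h₂(v, v) = (α^{2n+2}/β^{2n}) · h₁(v, v), then α = β, F₂ = β·F₁ identically on V, and h₂(v, w) = β² · h₁(v, w) for all v, w ∈ V. -/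
open MeasureTheory

/-- The dual complex Binet–Legendre form of a set `Ω`:
`g*_Ω(θ, φ) = ((n+1)/μ(Ω)) ∫_Ω θ(η) conj(φ(η)) dμ(η)`. -/
noncomputable def dualBL {V : Type*} [NormedAddCommGroup V] [NormedSpace ℂ V]
    [MeasurableSpace V] (μ : Measure V) (n : ℕ) (Ω : Set V)
    (θ φ : V →ₗ[ℂ] ℂ) : ℂ :=
  (((n : ℂ) + 1) / ((μ Ω).toReal : ℂ)) * ∫ η in Ω, θ η * (starRingEnd ℂ) (φ η) ∂μ

/-- A pseudonorm: nonnegative, absolutely homogeneous over `ℂ`, vanishing only at `0`,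
with open bounded unit ball. -/
def IsPseudonorm {V : Type*} [NormedAddCommGroup V] [NormedSpace ℂ V]
    (F : V → ℝ) : Prop :=
  (∀ v : V, 0 ≤ F v) ∧
  (∀ (c : ℂ) (v : V), F (c • v) = ‖c‖ * F v) ∧
  (∀ v : V, F v = 0 → v = 0) ∧
  IsOpen {v : V | F v < 1} ∧ Bornology.IsBounded {v : V | F v < 1}

/-- A Hermitian form: conjugate-linear in the first argument, complex-linear in the
second, with `h(w,v) = conj (h(v,w))`. -/
def IsHermitianForm {V : Type*} [AddCommGroup V] [Module ℂ V] (h : V → V → ℂ) : Prop :=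
  (∀ (c : ℂ) (v w : V), h (c • v) w = (starRingEnd ℂ) c * h v w) ∧
  (∀ v v' w : V, h (v + v') w = h v w + h v' w) ∧
  (∀ (c : ℂ) (v w : V), h v (c • w) = c * h v w) ∧
  (∀ v w w' : V, h v (w + w') = h v w + h v w') ∧
  (∀ v w : V, h w v = (starRingEnd ℂ) (h v w))

/-- Positive definiteness: `h(v,v) > 0` for every `v ≠ 0`. -/
def IsPosDefForm {V : Type*} [AddCommGroup V] [Module ℂ V] (h : V → V → ℂ) : Prop :=
  ∀ v : V, v ≠ 0 → 0 < (h v v).re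

/-- `h` is the Binet–Legendre metric of `Ω`: there is a Riesz map `r` for `h`
(`θ(v) = h(r θ, v)` for all `v`) such that the dual Binet–Legendre form of `Ω`
coincides with `h` composed with `r`. -/
def IsBLMetric {V : Type*} [NormedAddCommGroup V] [NormedSpace ℂ V]
    [MeasurableSpace V] (μ : Measure V) (n : ℕ) (Ω : Set V)
    (h : V → V → ℂ) : Prop :=
  ∃ r : (V →ₗ[ℂ] ℂ) → V,
    (∀ (θ : V →ₗ[ℂ] ℂ) (v : V), θ v = h (r θ) v) ∧
    (∀ θ φ : V →ₗ[ℂ] ℂ, dualBL μ n Ω θ φ = h (r θ) (r φ))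

/-!
Writing `I(Ω) = ∫_Ω |θ|²`, the dual form is `g*_Ω(θ, θ) = (n+1) I(Ω) / μ(Ω)`, and under `x ↦ t x`
the measure scales by `t^(2n)` and `I` by `t^(2n+2)`. Since `β⁻¹ Ω₁ ⊆ Ω₂ ⊆ α⁻¹ Ω₁`, this gives
`g*₂(θ, θ) ≥ (α^(2n) / β^(2n+2)) g*₁(θ, θ)`. For `θ = h₂(v, ·)` one has `g*₂(θ, θ) = h₂(v, v)`, and
Cauchy–Schwarz for `h₁` gives `h₂(v, v)² ≤ g*₁(θ, θ) h₁(v, v)`; so the equality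
`h₂(v, v) = (β^(2n+2) / α^(2n)) h₁(v, v)` forces equality in both `I(β⁻¹ Ω₁) ≤ I(Ω₂)` and
`μ(Ω₂) ≤ μ(α⁻¹ Ω₁)`. The latter makes `Ω₂` and `α⁻¹ Ω₁` equal up to a null set, so
`β^(-(2n+2)) I(Ω₁) = I(Ω₂) = α^(-(2n+2)) I(Ω₁)` and `α = β`. The other equality case is the same
argument with `F₁`, `F₂` exchanged.

Once `α = β`, `Ω₁ = α Ω₂`, hence `g*₁ = α² g*₂`; since each `g*` is the transport of `h` through its
Riesz map, this identity transfers to `h₂ = α² h₁`.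
-/

open ComplexConjugate Module Pointwise

section HermitianForm

variable {V : Type*} [AddCommGroup V] [Module ℂ V] {h : V → V → ℂ}

/-- Gives access to the Cauchy–Schwarz inequality of `InnerProductSpace.Core` without putting an
inner product instance on `V`. -/
abbrev IsHermitianForm.toCore (hh : IsHermitianForm h) (hp : IsPosDefForm h) :
    InnerProductSpace.Core ℂ V where
  inner := h
  conj_inner_symm x y := by rw [hh.2.2.2.2 x y, Complex.conj_conj]
  re_inner_nonneg x := by
    rcases eq_or_ne x 0 with rfl | hx
    · have h00 : h 0 0 = 0 := by simpa using hh.1 0 0 0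
      simp [h00]
    · exact (hp x hx).le
  add_left := hh.2.1
  smul_left x y c := hh.1 c x y
  definite x hx := by
    by_contra hne
    simpa [show h x x = 0 from hx] using hp x hne

theorem IsHermitianForm.norm_sq_le (hh : IsHermitianForm h) (hp : IsPosDefForm h) (x y : V) :
    ‖h x y‖ ^ 2 ≤ (h x x).re * (h y y).re := by
  have key := @InnerProductSpace.Core.inner_mul_inner_self_le ℂ V _ _ _ (hh.toCore hp).toCore x y
  change ‖h x y‖ * ‖h y x‖ ≤ (h x x).re * (h y y).re at key
  rwa [hh.2.2.2.2 x y, Complex.norm_conj, ← sq] at key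

theorem IsHermitianForm.eq_of_forall_apply_eq (hh : IsHermitianForm h) (hp : IsPosDefForm h)
    {u u' : V} (H : ∀ x, h u x = h u' x) : u = u' := by
  let c := hh.toCore hp
  rw [← sub_eq_zero, ← @InnerProductSpace.Core.inner_self_eq_zero ℂ V _ _ _ c]
  exact (@InnerProductSpace.Core.inner_sub_left ℂ V _ _ _ c.toCore u u' _).trans
    (sub_eq_zero.2 (H _))

def IsHermitianForm.toDual (hh : IsHermitianForm h) (v : V) : V →ₗ[ℂ] ℂ where
  toFun := h v
  map_add' := hh.2.2.2.1 v
  map_smul' c w := hh.2.2.1 c v w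

theorem IsHermitianForm.ofReal_re_apply_self (hh : IsHermitianForm h) (v : V) :
    ((h v v).re : ℂ) = h v v :=
  Complex.conj_eq_iff_re.1 (hh.2.2.2.2 v v).symm

@[simp]
theorem IsHermitianForm.toDual_apply (hh : IsHermitianForm h) (v w : V) : hh.toDual v w = h v w :=
  rfl

variable {r : (V →ₗ[ℂ] ℂ) → V}

theorem IsHermitianForm.riesz_toDual (hh : IsHermitianForm h) (hp : IsPosDefForm h)
    (hr : ∀ θ v, θ v = h (r θ) v) (v : V) : r (hh.toDual v) = v :=
  hh.eq_of_forall_apply_eq hp fun x => (hr _ x).symm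

theorem IsHermitianForm.apply_riesz_riesz (hh : IsHermitianForm h)
    (hr : ∀ θ v, θ v = h (r θ) v) (θ φ : V →ₗ[ℂ] ℂ) : h (r θ) (r φ) = conj (φ (r θ)) := by
  rw [hh.2.2.2.2, ← hr]

theorem IsHermitianForm.apply_eq_mul_of_riesz {h' : V → V → ℂ} {r' : (V →ₗ[ℂ] ℂ) → V}
    (hh : IsHermitianForm h) (hh' : IsHermitianForm h') (hp' : IsPosDefForm h')
    (hr : ∀ θ v, θ v = h (r θ) v) (hr' : ∀ θ v, θ v = h' (r' θ) v) {c : ℝ}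
    (hc : ∀ θ φ, h (r θ) (r φ) = c * h' (r' θ) (r' φ)) (v w : V) : h' v w = c * h v w := by
  have hrr' (θ : V →ₗ[ℂ] ℂ) : r θ = (c : ℂ) • r' θ := by
    rw [← sub_eq_zero, ← Module.forall_dual_apply_eq_zero_iff ℂ]
    intro φ
    have hφ := congrArg conj (hc θ φ)
    rw [hh.apply_riesz_riesz hr, hh'.apply_riesz_riesz hr', map_mul, Complex.conj_ofReal,
      Complex.conj_conj, Complex.conj_conj] at hφ
    rw [map_sub, map_smul, hφ, smul_eq_mul, sub_self]
  have hw := hr (hh'.toDual v) w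
  rwa [hh'.toDual_apply, hrr', hh.1, hh'.riesz_toDual hp' hr', Complex.conj_ofReal] at hw

end HermitianForm

section Scaling

variable {E : Type*} [NormedAddCommGroup E] [NormedSpace ℝ E] [FiniteDimensional ℝ E]
  [MeasurableSpace E] [BorelSpace E] (μ : Measure E) [μ.IsAddHaarMeasure]

theorem toReal_addHaar_smul_of_nonneg {t : ℝ} (ht : 0 ≤ t) (s : Set E) :
    (μ (t • s)).toReal = t ^ finrank ℝ E * (μ s).toReal := by
  rw [Measure.addHaar_smul_of_nonneg μ ht, ENNReal.toReal_mul,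
    ENNReal.toReal_ofReal (by positivity)]

theorem setIntegral_smul_set_of_homogeneous {F : Type*} [NormedAddCommGroup F] [NormedSpace ℝ F]
    {f : E → F} {k : ℕ} {t : ℝ} (ht : 0 < t) (hf : ∀ x, f (t • x) = t ^ k • f x) (s : Set E) :
    ∫ x in t • s, f x ∂μ = t ^ (finrank ℝ E + k) • ∫ x in s, f x ∂μ := by
  have h := Measure.setIntegral_comp_smul_of_pos μ f s ht
  simp_rw [hf, integral_smul] at h
  rw [pow_add, mul_smul, h, smul_inv_smul₀ (by positivity)]

end Scaling

section Pseudonorm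

variable {V : Type*} [NormedAddCommGroup V] [NormedSpace ℂ V] {F : V → ℝ}

theorem IsPseudonorm.apply_real_smul (hF : IsPseudonorm F) {t : ℝ} (ht : 0 ≤ t) (x : V) :
    F (t • x) = t * F x := by
  rw [← Complex.coe_smul, hF.2.1, Complex.norm_real, Real.norm_of_nonneg ht]

theorem IsPseudonorm.smul_ball (hF : IsPseudonorm F) {t : ℝ} (ht : 0 < t) :
    t • {v | F v < 1} = {v | F v < t} := by
  ext x
  rw [Set.mem_smul_set_iff_inv_smul_mem₀ ht.ne', Set.mem_ofPred_eq,
    hF.apply_real_smul (inv_nonneg.2 ht.le), inv_mul_lt_one₀ ht, Set.mem_ofPred_eq]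

end Pseudonorm

theorem dualBL_self_re {V : Type*} [NormedAddCommGroup V] [NormedSpace ℂ V]
    [MeasurableSpace V] (μ : Measure V) (n : ℕ) (Ω : Set V) (θ : V →ₗ[ℂ] ℂ) :
    (dualBL μ n Ω θ θ).re = (n + 1) / (μ Ω).toReal * ∫ x in Ω, ‖θ x‖ ^ 2 ∂μ := by
  have h : ∫ x in Ω, θ x * conj (θ x) ∂μ = ((∫ x in Ω, ‖θ x‖ ^ 2 ∂μ : ℝ) : ℂ) := by
    simp_rw [Complex.mul_conj']
    exact_mod_cast integral_ofReal (𝕜 := ℂ)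
  rw [dualBL, h, ← Complex.ofReal_natCast, ← Complex.ofReal_one, ← Complex.ofReal_add,
    ← Complex.ofReal_div, ← Complex.ofReal_mul, Complex.ofReal_re]

theorem eq_and_eq_of_mul_div_le {c m₁ m₂ I₁ I₂ A B : ℝ} (hc : 0 < c) (hm₁ : 0 < m₁)
    (hm₂ : 0 < m₂) (hI₁ : 0 < I₁) (hB : 0 < B) (hI : B * I₁ ≤ I₂) (hm : m₂ ≤ A * m₁)
    (hle : A / B * (c / m₂ * I₂) ≤ c / m₁ * I₁) : m₂ = A * m₁ ∧ I₂ = B * I₁ := by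
  have hle' : A * I₂ * m₁ ≤ B * I₁ * m₂ := by
    field_simp at hle
    nlinarith
  have hI₂ : 0 < I₂ := lt_of_lt_of_le (by positivity) hI
  constructor
  · nlinarith [mul_le_mul_of_nonneg_right hI hm₂.le, mul_le_mul_of_nonneg_left hm hI₂.le]
  · nlinarith [mul_le_mul_of_nonneg_right hI hm₂.le, mul_le_mul_of_nonneg_left hm hI₂.le]

section DualBL

variable {V : Type*} [NormedAddCommGroup V] [NormedSpace ℂ V] [FiniteDimensional ℂ V]
  [MeasurableSpace V] [BorelSpace V] (μ : Measure V) [μ.IsAddHaarMeasure]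

theorem dualBL_smul_set {n : ℕ} (hn : finrank ℂ V = n) {t : ℝ} (ht : 0 < t) (Ω : Set V)
    (θ φ : V →ₗ[ℂ] ℂ) : dualBL μ n (t • Ω) θ φ = (t : ℂ) ^ 2 * dualBL μ n Ω θ φ := by
  have hhom : ∀ x, θ (t • x) * conj (φ (t • x)) = t ^ 2 • (θ x * conj (φ x)) := by
    intro x
    simp only [← Complex.coe_smul, map_smul, smul_eq_mul, map_mul, Complex.conj_ofReal]
    push_cast; ring
  unfold dualBL
  rw [setIntegral_smul_set_of_homogeneous μ ht hhom, toReal_addHaar_smul_of_nonneg μ ht.le,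
    finrank_real_of_complex, hn, Complex.real_smul]
  push_cast
  rcases eq_or_ne ((μ Ω).toReal : ℂ) 0 with h0 | h0
  · simp [h0]
  · have : (t : ℂ) ≠ 0 := by exact_mod_cast ht.ne'
    field_simp
    ring

theorem setIntegral_norm_sq_smul_set (θ : V →ₗ[ℂ] ℂ) {t : ℝ} (ht : 0 < t) (s : Set V) :
    ∫ x in t • s, ‖θ x‖ ^ 2 ∂μ = t ^ (finrank ℝ V + 2) * ∫ x in s, ‖θ x‖ ^ 2 ∂μ := by
  refine setIntegral_smul_set_of_homogeneous μ ht (fun x => ?_) s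
  rw [← Complex.coe_smul, map_smul, norm_smul, Complex.norm_real,
    Real.norm_of_nonneg ht.le, smul_eq_mul, mul_pow]

theorem eq_of_mul_dualBL_re_le {n : ℕ} (hn : finrank ℂ V = n) {Ω₁ Ω₂ : Set V}
    (hΩ₁ : Bornology.IsBounded Ω₁) (hΩ₂ : MeasurableSet Ω₂) {α β : ℝ} (hα : 0 < α) (hβ : 0 < β)
    (hinner : β⁻¹ • Ω₁ ⊆ Ω₂) (houter : Ω₂ ⊆ α⁻¹ • Ω₁) {θ : V →ₗ[ℂ] ℂ}
    (hpos : 0 < (dualBL μ n Ω₁ θ θ).re)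
    (hle : β ^ (2 * n + 2) / α ^ (2 * n) * (dualBL μ n Ω₂ θ θ).re ≤ (dualBL μ n Ω₁ θ θ).re) :
    α = β := by
  have hd : finrank ℝ V = 2 * n := by rw [finrank_real_of_complex, hn]
  have hI_smul {t : ℝ} (ht : 0 < t) :
      ∫ x in t • Ω₁, ‖θ x‖ ^ 2 ∂μ = t ^ (2 * n + 2) * ∫ x in Ω₁, ‖θ x‖ ^ 2 ∂μ := by
    rw [setIntegral_norm_sq_smul_set μ θ ht, hd]
  have hm_smul {t : ℝ} (ht : 0 < t) : (μ (t • Ω₁)).toReal = t ^ (2 * n) * (μ Ω₁).toReal := by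
    rw [toReal_addHaar_smul_of_nonneg μ ht.le, hd]
  have hαΩ₁ : μ (α⁻¹ • Ω₁) ≠ ⊤ := (hΩ₁.smul₀ α⁻¹).measure_lt_top.ne
  have hΩ₂fin : μ Ω₂ ≠ ⊤ := ne_top_of_le_ne_top hαΩ₁ (measure_mono houter)
  have hint : IntegrableOn (fun x => ‖θ x‖ ^ 2) (α⁻¹ • Ω₁) μ :=
    (θ.continuous_of_finiteDimensional.norm.pow 2).continuousOn.integrableOn_compact
      (hΩ₁.smul₀ α⁻¹).isCompact_closure |>.mono_set subset_closure
  have hI_mono := setIntegral_mono_set (hint.mono_set houter)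
    (.of_forall fun _ => by positivity) hinner.eventuallyLE
  have hm_mono := ENNReal.toReal_mono hαΩ₁ (measure_mono houter)
  have hm₂_ge := ENNReal.toReal_mono hΩ₂fin (measure_mono hinner)
  rw [hI_smul (inv_pos.2 hβ)] at hI_mono
  rw [hm_smul (inv_pos.2 hα)] at hm_mono
  rw [hm_smul (inv_pos.2 hβ)] at hm₂_ge
  rw [dualBL_self_re, dualBL_self_re] at hle
  rw [dualBL_self_re] at hpos
  have hm₁ : 0 < (μ Ω₁).toReal := lt_of_le_of_ne ENNReal.toReal_nonneg fun h => by
    simp [← h] at hpos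
  have hI₁ : 0 < ∫ x in Ω₁, ‖θ x‖ ^ 2 ∂μ := pos_of_mul_pos_right hpos (by positivity)
  have hK : β ^ (2 * n + 2) / α ^ (2 * n) = α⁻¹ ^ (2 * n) / β⁻¹ ^ (2 * n + 2) := by
    rw [inv_pow, inv_pow, inv_div_inv]
  obtain ⟨hm_eq, hI_eq⟩ := eq_and_eq_of_mul_div_le (by positivity) hm₁
    (lt_of_lt_of_le (by positivity) hm₂_ge) hI₁ (by positivity) hI_mono hm_mono
    (hK ▸ hle)
  have hae : Ω₂ =ᵐ[μ] α⁻¹ • Ω₁ := ae_eq_of_subset_of_measure_ge houter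
    ((ENNReal.toReal_eq_toReal_iff' hαΩ₁ hΩ₂fin).1 (by rw [hm_smul (inv_pos.2 hα), hm_eq])).le
    hΩ₂.nullMeasurableSet hαΩ₁
  rw [setIntegral_congr_set hae, hI_smul (inv_pos.2 hα)] at hI_eq
  have hpow := mul_right_cancel₀ hI₁.ne' hI_eq
  exact inv_inj.1 ((pow_left_inj₀ (inv_pos.2 hα).le (inv_pos.2 hβ).le (by omega)).1 hpow)

theorem eq_of_blMetric_apply_self_eq {n : ℕ} (hn : finrank ℂ V = n) {F₁ F₂ : V → ℝ}
    (hF₁ : IsPseudonorm F₁) (hF₂ : IsPseudonorm F₂) {α β : ℝ} (hα : 0 < α) (hβ : 0 < β)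
    (hcomp : ∀ v, α * F₁ v ≤ F₂ v ∧ F₂ v ≤ β * F₁ v) {h₁ h₂ : V → V → ℂ}
    (h₁herm : IsHermitianForm h₁) (h₁pos : IsPosDefForm h₁)
    (h₂herm : IsHermitianForm h₂) (h₂pos : IsPosDefForm h₂)
    (h₁BL : IsBLMetric μ n {v | F₁ v < 1} h₁) (h₂BL : IsBLMetric μ n {v | F₂ v < 1} h₂)
    {v : V} (hv : v ≠ 0)
    (hveq : (h₂ v v).re = β ^ (2 * n + 2) / α ^ (2 * n) * (h₁ v v).re) : α = β := by
  obtain ⟨r₁, hr₁, hg₁⟩ := h₁BL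
  obtain ⟨r₂, hr₂, hg₂⟩ := h₂BL
  set θ := h₂herm.toDual v
  have hθv : θ v = ((h₂ v v).re : ℂ) := (h₂herm.ofReal_re_apply_self v).symm
  have hg₂θ : (dualBL μ n {v | F₂ v < 1} θ θ).re = (h₂ v v).re := by
    rw [hg₂, h₂herm.riesz_toDual h₂pos hr₂]
  have hr₁θ : r₁ θ ≠ 0 := by
    intro h0
    have h₁0 : h₁ 0 v = 0 := by simpa using h₁herm.1 0 0 v
    have := hr₁ θ v
    rw [hθv, h0, h₁0, Complex.ofReal_eq_zero] at this
    exact (h₂pos v hv).ne' this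
  have hCS : (h₂ v v).re ^ 2 ≤ (dualBL μ n {v | F₁ v < 1} θ θ).re * (h₁ v v).re := by
    have := h₁herm.norm_sq_le h₁pos (r₁ θ) v
    rwa [← hr₁, hθv, Complex.norm_real, Real.norm_of_nonneg (h₂pos v hv).le, ← hg₁] at this
  refine eq_of_mul_dualBL_re_le μ hn hF₁.2.2.2.2 hF₂.2.2.2.1.measurableSet hα hβ ?_ ?_
    (by rw [hg₁]; exact h₁pos _ hr₁θ) ?_
  · rw [hF₁.smul_ball (inv_pos.2 hβ)]
    intro x (hx : F₁ x < β⁻¹)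
    show F₂ x < 1
    nlinarith [(hcomp x).2, mul_inv_cancel₀ hβ.ne']
  · rw [hF₁.smul_ball (inv_pos.2 hα)]
    intro x (hx : F₂ x < 1)
    show F₁ x < α⁻¹
    nlinarith [(hcomp x).1, mul_inv_cancel₀ hα.ne']
  · rw [hg₂θ]
    refine le_of_mul_le_mul_right ?_ (h₁pos v hv)
    linear_combination hCS - (h₂ v v).re * hveq

end DualBL

/-- Equality case in the Binet–Legendre comparison: if `α F₁ ≤ F₂ ≤ β F₁`
with `0 < α ≤ β` and equality holds in one of the two comparison inequalities at some
`v ≠ 0`, then `α = β`, `F₂ = β F₁`, and `h₂ = β² h₁`. -/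
theorem blMetric_comparison_equality_case
    {V : Type*} [NormedAddCommGroup V] [NormedSpace ℂ V] [FiniteDimensional ℂ V]
    [MeasurableSpace V] [BorelSpace V]
    (μ : Measure V) [μ.IsAddHaarMeasure]
    (n : ℕ) (hn : Module.finrank ℂ V = n)
    (F₁ F₂ : V → ℝ) (hF₁ : IsPseudonorm F₁) (hF₂ : IsPseudonorm F₂)
    (α β : ℝ) (hα : 0 < α) (hαβ : α ≤ β)
    (hcomp : ∀ v : V, α * F₁ v ≤ F₂ v ∧ F₂ v ≤ β * F₁ v)
    (h₁ h₂ : V → V → ℂ)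
    (h₁herm : IsHermitianForm h₁) (h₁pos : IsPosDefForm h₁)
    (h₂herm : IsHermitianForm h₂) (h₂pos : IsPosDefForm h₂)
    (h₁BL : IsBLMetric μ n {v : V | F₁ v < 1} h₁)
    (h₂BL : IsBLMetric μ n {v : V | F₂ v < 1} h₂)
    (heq : ∃ v : V, v ≠ 0 ∧
      ((h₂ v v).re = (β ^ (2 * n + 2) / α ^ (2 * n)) * (h₁ v v).re ∨
        (h₂ v v).re = (α ^ (2 * n + 2) / β ^ (2 * n)) * (h₁ v v).re)) :
    α = β ∧ (∀ v : V, F₂ v = β * F₁ v) ∧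
      (∀ v w : V, h₂ v w = (β ^ 2 : ℂ) * h₁ v w) := by
  obtain ⟨v, hv, hveq⟩ := heq
  have hβ : 0 < β := hα.trans_le hαβ
  have hαβ_eq : α = β := by
    rcases hveq with hveq | hveq
    · exact eq_of_blMetric_apply_self_eq μ hn hF₁ hF₂ hα hβ hcomp h₁herm h₁pos h₂herm h₂pos
        h₁BL h₂BL hv hveq
    · refine (inv_inj.1 (eq_of_blMetric_apply_self_eq μ hn hF₂ hF₁ (inv_pos.2 hβ) (inv_pos.2 hα)
        (fun w => ⟨?_, ?_⟩) h₂herm h₂pos h₁herm h₁pos h₂BL h₁BL hv ?_)).symm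
      · rw [inv_mul_le_iff₀ hβ]; exact (hcomp w).2
      · rw [le_inv_mul_iff₀ hα]; exact (hcomp w).1
      · rw [hveq, inv_pow, inv_pow]; field_simp
  subst hαβ_eq
  have hF : ∀ w, F₂ w = α * F₁ w := fun w => le_antisymm (hcomp w).2 (hcomp w).1
  refine ⟨rfl, hF, ?_⟩
  obtain ⟨r₁, hr₁, hg₁⟩ := h₁BL
  obtain ⟨r₂, hr₂, hg₂⟩ := h₂BL
  have hΩ : α • {v | F₂ v < 1} = {v | F₁ v < 1} := by
    rw [hF₂.smul_ball hα]
    ext x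
    simp only [Set.mem_ofPred_eq, hF, mul_lt_iff_lt_one_right hα]
  have hg (θ φ : V →ₗ[ℂ] ℂ) : h₁ (r₁ θ) (r₁ φ) = ((α ^ 2 : ℝ) : ℂ) * h₂ (r₂ θ) (r₂ φ) := by
    rw [← hg₁, ← hg₂, ← hΩ, dualBL_smul_set μ hn hα, Complex.ofReal_pow]
  exact_mod_cast h₁herm.apply_eq_mul_of_riesz h₂herm h₂pos hr₁ hr₂ hg
end

section
/- Let V be a finite-dimensional complex normed vector space with Borel σ-algebra and additive Haar measure μ, and let Ω ⊆ V be a bounded measurable set invariant under multiplication by i, i.e. i•Ω = Ω. Then for all complex-linear functionals θ, φ : V → ℂ: ∫_Ω θ(η) · conj(φ(η)) dμ(η) = 2 · ∫_Ω Re(θ(η)) · Re(φ(η)) dμ(η) − 2i · ∫_Ω Re(θ(i·η)) · Re(φ(η)) dμ(η). -/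
/-!
Multiplication by `i` preserves `μ` (as a real-linear map its determinant is `|i| ^ (2n) = 1`)
and `Ω`, while `θ (i η) φ (i η) = -θ η φ η`; hence `∫_Ω θ φ dμ = 0`. Adding this to the left-hand
side replaces `conj φ` by `conj φ + φ = 2 Re φ`, and `θ = Re θ - i Re θ(i ·)` finishes the proof.
-/

open MeasureTheory
open scoped Pointwise

namespace Complex

section

variable {V : Type*} [NormedAddCommGroup V] [NormedSpace ℂ V]

theorem det_restrictScalars_smul_id (c : ℂ) :
    LinearMap.det ((c • LinearMap.id : V →ₗ[ℂ] V).restrictScalars ℝ) =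
      normSq c ^ Module.finrank ℂ V := by
  rw [LinearMap.det_restrictScalars, LinearMap.det_smul, LinearMap.det_id, mul_one, map_pow,
    Algebra.norm_complex_apply]

variable [FiniteDimensional ℂ V] [MeasurableSpace V] [BorelSpace V]
  (μ : Measure V) [μ.IsAddHaarMeasure]

theorem measurePreserving_smul_of_norm_eq_one {c : ℂ} (hc : ‖c‖ = 1) :
    MeasurePreserving (fun v : V => c • v) μ μ := by
  set f : V →ₗ[ℝ] V := (c • LinearMap.id : V →ₗ[ℂ] V).restrictScalars ℝ
  have hdet : LinearMap.det f = 1 := by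
    rw [det_restrictScalars_smul_id, normSq_eq_norm_sq, hc, one_pow, one_pow]
  refine ⟨f.continuous_of_finiteDimensional.measurable, ?_⟩
  change Measure.map f μ = μ
  rw [Measure.map_linearMap_addHaar_eq_smul_addHaar μ (by simp [hdet]), hdet]
  simp

variable {E : Type*} [NormedAddCommGroup E] [NormedSpace ℝ E] {c : ℂ} {Ω : Set V}

theorem setIntegral_comp_smul_of_norm_eq_one (hc : ‖c‖ = 1) (hΩ : c • Ω = Ω) (g : V → E) :
    ∫ η in Ω, g (c • η) ∂μ = ∫ η in Ω, g η ∂μ := by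
  have hc₀ : c ≠ 0 := by rintro rfl; simp at hc
  have hpre : (fun v : V => c • v) ⁻¹' Ω = Ω := by
    rw [Set.preimage_smul₀ hc₀]
    nth_rw 1 [← hΩ]
    rw [smul_smul, inv_mul_cancel₀ hc₀, one_smul]
  have hemb : MeasurableEmbedding (fun v : V => c • v) :=
    (Homeomorph.smulOfNeZero c hc₀).measurableEmbedding
  simpa [hpre] using
    (measurePreserving_smul_of_norm_eq_one μ hc).setIntegral_preimage_emb hemb g Ω

theorem setIntegral_eq_zero_of_comp_smul_eq_neg (hc : ‖c‖ = 1) (hΩ : c • Ω = Ω) {f : V → E}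
    (hf : ∀ v, f (c • v) = -f v) : ∫ η in Ω, f η ∂μ = 0 := by
  have h := setIntegral_comp_smul_of_norm_eq_one μ hc hΩ f
  simp only [hf, integral_neg] at h
  rw [neg_eq_iff_add_eq_zero, ← two_smul ℝ] at h
  exact (smul_eq_zero.mp h).resolve_left two_ne_zero

theorem setIntegral_mul_eq_zero_of_I_smul_eq (hΩ : I • Ω = Ω) (θ φ : V →ₗ[ℂ] ℂ) :
    ∫ η in Ω, θ η * φ η ∂μ = 0 :=
  setIntegral_eq_zero_of_comp_smul_eq_neg μ (by simp) hΩ fun v => by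
    simp only [map_smul, smul_eq_mul]
    linear_combination (θ v * φ v) * I_mul_I

end

theorem mul_two_re_eq_re_parts (z w : ℂ) :
    z * (2 * w.re : ℝ) = 2 * (z.re * w.re : ℝ) - 2 * I * ((I * z).re * w.re : ℝ) := by
  apply Complex.ext <;> simp <;> ring

end Complex

theorem Continuous.integrableOn_of_isBounded {X E : Type*} [MetricSpace X] [ProperSpace X]
    [MeasurableSpace X] [OpensMeasurableSpace X] {μ : Measure X} [IsFiniteMeasureOnCompacts μ]
    [NormedAddCommGroup E] {g : X → E} (hg : Continuous g) {s : Set X}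
    (hs : Bornology.IsBounded s) : IntegrableOn g s μ :=
  (hg.continuousOn.integrableOn_compact hs.isCompact_closure).mono_set subset_closure

theorem integral_mul_conj_eq_real_parts_general
    {V : Type*} [NormedAddCommGroup V] [NormedSpace ℂ V] [FiniteDimensional ℂ V]
    [MeasurableSpace V] [BorelSpace V]
    (μ : Measure V) [μ.IsAddHaarMeasure]
    (Ω : Set V) (hΩbdd : Bornology.IsBounded Ω)
    (hΩinv : (Complex.I • Ω : Set V) = Ω)
    (θ φ : V →ₗ[ℂ] ℂ) :
    ∫ η in Ω, θ η * (starRingEnd ℂ) (φ η) ∂μ =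
      2 * ((∫ η in Ω, (θ η).re * (φ η).re ∂μ : ℝ) : ℂ) -
        2 * Complex.I * ((∫ η in Ω, (θ (Complex.I • η)).re * (φ η).re ∂μ : ℝ) : ℂ) := by
  have hθ : Continuous θ := θ.continuous_of_finiteDimensional
  have hφ : Continuous φ := φ.continuous_of_finiteDimensional
  have hint {g : V → ℂ} (hg : Continuous g) : Integrable g (μ.restrict Ω) :=
    hg.integrableOn_of_isBounded hΩbdd
  calc ∫ η in Ω, θ η * (starRingEnd ℂ) (φ η) ∂μ
      = ∫ η in Ω, θ η * φ η ∂μ + ∫ η in Ω, θ η * (starRingEnd ℂ) (φ η) ∂μ := by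
        rw [Complex.setIntegral_mul_eq_zero_of_I_smul_eq μ hΩinv, zero_add]
    _ = ∫ η in Ω, θ η * (2 * (φ η).re : ℝ) ∂μ := by
        rw [← integral_add (hint (by fun_prop)) (hint (by fun_prop))]
        simp only [← mul_add, Complex.add_conj]
    _ = ∫ η in Ω, (2 * (((θ η).re * (φ η).re : ℝ) : ℂ) -
          2 * Complex.I * (((θ (Complex.I • η)).re * (φ η).re : ℝ) : ℂ)) ∂μ := by
        simp only [map_smul, smul_eq_mul, Complex.mul_two_re_eq_re_parts]
    _ = _ := by
        rw [integral_sub (hint (by fun_prop)) (hint (by fun_prop)), integral_const_mul,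
          integral_const_mul, integral_complex_ofReal,
          integral_complex_ofReal]

/-- For a bounded measurable set `Ω` invariant under multiplication by
`i`, and complex-linear functionals `θ, φ`:
`∫_Ω θ conj(φ) dμ = 2 ∫_Ω Re(θ) Re(φ) dμ − 2i ∫_Ω Re(θ(i·η)) Re(φ(η)) dμ`. -/
theorem integral_mul_conj_eq_real_parts
    {V : Type*} [NormedAddCommGroup V] [NormedSpace ℂ V] [FiniteDimensional ℂ V]
    [MeasurableSpace V] [BorelSpace V]
    (μ : Measure V) [μ.IsAddHaarMeasure]
    (Ω : Set V) (hΩmeas : MeasurableSet Ω) (hΩbdd : Bornology.IsBounded Ω)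
    (hΩinv : (Complex.I • Ω : Set V) = Ω)
    (θ φ : V →ₗ[ℂ] ℂ) :
    ∫ η in Ω, θ η * (starRingEnd ℂ) (φ η) ∂μ =
      2 * ((∫ η in Ω, (θ η).re * (φ η).re ∂μ : ℝ) : ℂ) -
        2 * Complex.I * ((∫ η in Ω, (θ (Complex.I • η)).re * (φ η).re ∂μ : ℝ) : ℂ) :=
  integral_mul_conj_eq_real_parts_general μ Ω hΩbdd hΩinv θ φ
end
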